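/- arXiv:2101.01772 — 9 statements merged into one kernel-verified Lean document; each statement's English description precedes it below -/
import Mathlib

section
/- Let G be a connected bipartite graph with bipartition (X,Y) that contains no induced path on 8 vertices, and let D be an efficient dominating set of G. Then for every x ∈ D ∩ X and y ∈ D ∩ Y, the distance between x and y is 3 or 5. -/
open SimpleGraph

variable {V : Type*}

/-- The closed neighborhood of a vertex. -/
def closedNbhd (G : SimpleGraph V) (v : V) : Set V := insert v (G.neighborSet v)

/-- `D` is an efficient dominating set: every vertex has exactly one `D`-vertex
in its closed neighborhood. -/
def IsEDS (G : SimpleGraph V) (D : Set V) : Prop :=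
  ∀ v : V, ∃! d, d ∈ D ∧ d ∈ closedNbhd G v

/-- The distance (in `ℕ∞`) from a vertex to a set of vertices. -/
noncomputable def distToSet (G : SimpleGraph V) (S : Set V) (v : V) : ℕ∞ :=
  sInf ((fun d => G.edist v d) '' S)

/-- The `i`-th distance level of a vertex set. -/
noncomputable def lvl (G : SimpleGraph V) (S : Set V) (i : ℕ) : Set V :=
  {v | distToSet G S v = (i : ℕ∞)}

/-- `p` is an induced (chordless) path on `k` vertices in `G`. -/
def IsInducedPath (G : SimpleGraph V) {k : ℕ} (p : Fin k → V) : Prop :=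
  Function.Injective p ∧
    ∀ i j : Fin k, G.Adj (p i) (p j) ↔ (i.val + 1 = j.val ∨ j.val + 1 = i.val)

/-- `G` contains no induced path on 8 vertices. -/
def P8Free (G : SimpleGraph V) : Prop := ∀ p : Fin 8 → V, ¬ IsInducedPath G p

/-- `(X, Y)` is a bipartition of `G`. -/
structure Bipartition (G : SimpleGraph V) (X Y : Set V) : Prop where
  union : X ∪ Y = Set.univ
  disj : Disjoint X Y
  adj : ∀ ⦃u v : V⦄, G.Adj u v → (u ∈ X ∧ v ∈ Y) ∨ (u ∈ Y ∧ v ∈ X)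

private lemma dist_getVert_le (G : SimpleGraph V) (hc : G.Connected) {u v : V}
    (w : G.Walk u v) (i : ℕ) : G.dist u (w.getVert i) ≤ i := by
  induction i with
  | zero => simp [w.getVert_zero]
  | succ i ih =>
    by_cases hi : i < w.length
    · have hadj := w.adj_getVert_succ hi
      calc G.dist u (w.getVert (i+1)) ≤ G.dist u (w.getVert i)
            + G.dist (w.getVert i) (w.getVert (i+1)) := hc.dist_triangle
        _ ≤ i + 1 := by
            have : G.dist (w.getVert i) (w.getVert (i+1)) = 1 :=
              SimpleGraph.dist_eq_one_iff_adj.mpr hadj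
            omega
    · rw [w.getVert_of_length_le (by omega : w.length ≤ i + 1),
        ← w.getVert_of_length_le (by omega : w.length ≤ i)]
      omega

private lemma getVert_dist_le (G : SimpleGraph V) (hc : G.Connected) {u v : V}
    (w : G.Walk u v) {i : ℕ} (hi : i ≤ w.length) :
    G.dist (w.getVert i) v ≤ w.length - i := by
  have h := dist_getVert_le G hc w.reverse (w.length - i)
  rw [w.getVert_reverse] at h
  have : w.length - (w.length - i) = i := by omega
  rw [this] at h
  rwa [SimpleGraph.dist_comm]


/-- in a connected `P₈`-free bipartite graph with e.d.s. `D`,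
`D`-vertices in opposite parts are at distance 3 or 5. -/
theorem stmt_2 [Fintype V] (G : SimpleGraph V) (X Y : Set V)
    (hbip : Bipartition G X Y) (hconn : G.Connected) (hP8 : P8Free G)
    (D : Set V) (hD : IsEDS G D)
    {x y : V} (hx : x ∈ D ∩ X) (hy : y ∈ D ∩ Y) :
    G.dist x y = 3 ∨ G.dist x y = 5 := by
  obtain ⟨hxD, hxX⟩ := hx
  obtain ⟨hyD, hyY⟩ := hy
  have hyX : y ∉ X := fun h => hbip.disj.ne_of_mem h hyY rfl
  have hxy : x ≠ y := fun h => hyX (h ▸ hxX)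
  -- adjacency flips sides
  have hflip : ∀ {a b : V}, G.Adj a b → (a ∈ X ↔ b ∉ X) := by
    intro a b hab
    rcases hbip.adj hab with ⟨ha, hb⟩ | ⟨ha, hb⟩
    · exact ⟨fun _ => fun hbX => hbip.disj.ne_of_mem hbX hb rfl, fun _ => ha⟩
    · constructor
      · intro haX; exact absurd rfl (hbip.disj.ne_of_mem haX ha)
      · intro hbX; exact absurd hb hbX
  -- parity along walks
  have hpar : ∀ {u v : V} (w : G.Walk u v), (Even w.length ↔ (u ∈ X ↔ v ∈ X)) := by
    intro u v w
    induction w with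
    | nil => simp
    | @cons a b c h p ih =>
      have h1 := hflip h
      simp only [SimpleGraph.Walk.length_cons, Nat.even_add_one, ih]
      tauto
  obtain ⟨w, hw⟩ := (hconn.preconnected x y).exists_walk_length_eq_dist
  set L := G.dist x y with hL
  have hLodd : ¬ Even L := by
    rw [← hw]
    intro h
    exact hyX ((hpar w).mp h |>.mp hxX)
  have hL1 : L ≠ 1 := by
    intro h1
    have hadj : G.Adj x y := SimpleGraph.dist_eq_one_iff_adj.mp h1
    obtain ⟨d, _, hd!⟩ := hD x
    have hxx : x = d := hd! x ⟨hxD, Set.mem_insert _ _⟩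
    have hyy : y = d := hd! y ⟨hyD, Set.mem_insert_of_mem _ hadj⟩
    exact hxy (hxx.trans hyy.symm)
  have hLpos : 0 < L := hconn.pos_dist_of_ne hxy
  have hL6 : L ≤ 6 := by
    by_contra h6
    push_neg at h6
    have hL7 : 7 ≤ L := h6
    -- distances from x along the geodesic
    have hdist : ∀ i : ℕ, i ≤ L → G.dist x (w.getVert i) = i := by
      intro i hi
      have h1 : G.dist x (w.getVert i) ≤ i := dist_getVert_le G hconn w i
      have h2 : G.dist (w.getVert i) y ≤ L - i := by
        have := getVert_dist_le G hconn w (i := i) (by omega)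
        omega
      have h3 : L ≤ G.dist x (w.getVert i) + G.dist (w.getVert i) y :=
        hconn.dist_triangle
      omega
    set p : Fin 8 → V := fun i => w.getVert i.val with hp
    apply hP8 p
    constructor
    · intro i j hij
      have : G.dist x (p i) = G.dist x (p j) := by rw [hij]
      rw [hdist i (by omega), hdist j (by omega)] at this
      exact Fin.ext this
    · intro i j
      constructor
      · intro hadj
        have hij : (i : ℕ) ≠ j := by
          intro h
          exact G.irrefl (by rwa [show i = j from Fin.ext h] at hadj)
        have h1 : G.dist x (p j) ≤ G.dist x (p i) + 1 := by
          have := hconn.dist_triangle (u := x) (v := p i) (w := p j)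
          have h2 : G.dist (p i) (p j) = 1 := SimpleGraph.dist_eq_one_iff_adj.mpr hadj
          omega
        have h2 : G.dist x (p i) ≤ G.dist x (p j) + 1 := by
          have := hconn.dist_triangle (u := x) (v := p j) (w := p i)
          have h3 : G.dist (p j) (p i) = 1 := SimpleGraph.dist_eq_one_iff_adj.mpr hadj.symm
          omega
        rw [hdist i (by omega), hdist j (by omega)] at h1 h2
        omega
      · rintro (hij | hij)
        · have : (i : ℕ) < w.length := by omega
          have := w.adj_getVert_succ this
          rwa [show (i : ℕ) + 1 = (j : ℕ) from hij] at this
        · have : (j : ℕ) < w.length := by omega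
          have h := w.adj_getVert_succ this
          rw [show (j : ℕ) + 1 = (i : ℕ) from hij] at h
          exact h.symm
  obtain ⟨k, hk⟩ := Nat.odd_iff.mpr (Nat.not_even_iff.mp hLodd)
  omega
end

section
/- Let G be a graph with an efficient dominating set D, let D_basis ⊆ D be nonempty, and let N_i denote the distance levels of D_basis. Then every vertex u ∈ N_2 has a neighbor in D ∩ N_3. -/
open SimpleGraph

variable {V : Type*}

-- key lemma: distinct D vertices are at edist ≥ 3
lemma eds_far (G : SimpleGraph V) {D : Set V} (hD : IsEDS G D)
    {x y : V} (hx : x ∈ D) (hy : y ∈ D) (hxy : x ≠ y) : 3 ≤ G.edist x y := by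
  by_contra h
  push_neg at h
  have hne : G.edist x y ≠ ⊤ := by
    intro ht; rw [ht] at h; simp at h
  obtain ⟨p, hp⟩ := SimpleGraph.exists_walk_of_edist_ne_top hne
  have hlen : (p.length : ℕ∞) < 3 := by rw [hp]; exact h
  have hlen' : p.length < 3 := by exact_mod_cast hlen
  -- case on walk structure
  cases p with
  | nil => exact hxy rfl
  | cons hadj q =>
    rename_i w
    cases q with
    | nil =>
      -- x adjacent to y
      obtain ⟨d, _, hun⟩ := hD x
      have h1 : x = d := hun x ⟨hx, Set.mem_insert _ _⟩
      have h2 : y = d := hun y ⟨hy, Set.mem_insert_of_mem _ hadj⟩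
      exact hxy (h1.trans h2.symm)
    | cons hadj2 r =>
      cases r with
      | nil =>
        obtain ⟨d, _, hun⟩ := hD w
        have h1 : x = d := hun x ⟨hx, Set.mem_insert_of_mem _ hadj.symm⟩
        have h2 : y = d := hun y ⟨hy, Set.mem_insert_of_mem _ hadj2⟩
        exact hxy (h1.trans h2.symm)
      | cons h3 s =>
        simp [SimpleGraph.Walk.length_cons] at hlen'
        omega

/-- every vertex of `N₂` has a neighbor in `D ∩ N₃`. -/
theorem stmt_5 [Fintype V] (G : SimpleGraph V) (D Dbasis : Set V)
    (hD : IsEDS G D) (hsub : Dbasis ⊆ D) (hne : Dbasis.Nonempty)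
    {u : V} (hu : u ∈ lvl G Dbasis 2) :
    ∃ v : V, v ∈ D ∩ lvl G Dbasis 3 ∧ G.Adj u v := by
  have hu2 : sInf ((fun d => G.edist u d) '' Dbasis) = (2 : ℕ∞) := hu
  -- lower bound on edist to any basis vertex
  have hlb : ∀ b ∈ Dbasis, (2 : ℕ∞) ≤ G.edist u b := by
    intro b hb
    rw [← hu2]
    exact sInf_le ⟨b, hb, rfl⟩
  -- find b with edist u b = 2
  have hlt : sInf ((fun d => G.edist u d) '' Dbasis) < (3 : ℕ∞) := by
    rw [hu2]; norm_num
  obtain ⟨a, ⟨b, hb, rfl⟩, ha3⟩ := sInf_lt_iff.mp hlt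
  have ha3 : G.edist u b < 3 := ha3
  have hub : G.edist u b = 2 := by
    have h2 := hlb b hb
    have hne' : G.edist u b ≠ ⊤ := fun ht => by rw [ht] at ha3; simp at ha3
    lift G.edist u b to ℕ using hne' with n hn
    have : n < 3 := by exact_mod_cast ha3
    have : 2 ≤ n := by exact_mod_cast h2
    norm_cast; omega
  -- get middle vertex w
  obtain ⟨p, hp⟩ := SimpleGraph.exists_walk_of_edist_eq_coe hub
  have hub' : u ≠ b := fun h => by
    rw [h, SimpleGraph.edist_self] at hub; simp at hub
  obtain ⟨w, huw, hwb⟩ : ∃ w, G.Adj u w ∧ G.Adj w b := by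
    cases p with
    | nil => simp at hp
    | cons hadj q =>
      rename_i w
      cases q with
      | nil => simp at hp
      | cons hadj2 r =>
        cases r with
        | nil => exact ⟨w, hadj, hadj2⟩
        | cons h3 s => simp [SimpleGraph.Walk.length_cons] at hp
  -- dominator of u
  obtain ⟨d, ⟨hdD, hdN⟩, hun⟩ := hD u
  have hud : G.Adj u d := by
    rcases hdN with h | h
    · -- d = u, so u ∈ D; contradiction via w
      subst h
      obtain ⟨e, _, hune⟩ := hD w
      have h1 : d = e := hune d ⟨hdD, Set.mem_insert_of_mem _ huw.symm⟩
      have h2 : b = e := hune b ⟨hsub hb, Set.mem_insert_of_mem _ hwb⟩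
      exact absurd (h1.trans h2.symm) hub'
    · exact h
  have hud1 : G.edist u d = 1 := SimpleGraph.edist_eq_one_iff_adj.mpr hud
  have hdb' : ∀ b' ∈ Dbasis, d ≠ b' := by
    intro b' hb' h
    subst h
    have := hlb d hb'
    rw [hud1] at this
    norm_num at this
  have hd3 : distToSet G Dbasis d = 3 := by
    apply le_antisymm
    · calc sInf ((fun x => G.edist d x) '' Dbasis) ≤ G.edist d b := sInf_le ⟨b, hb, rfl⟩
      _ ≤ G.edist d u + G.edist u b := SimpleGraph.edist_triangle
      _ = 1 + 2 := by rw [SimpleGraph.edist_comm, hud1, hub]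
      _ = 3 := by norm_num
    · apply le_sInf
      rintro x ⟨b', hb', rfl⟩
      exact eds_far G hD hdD (hsub hb') (hdb' b' hb')
  exact ⟨d, ⟨hdD, hd3⟩, hud⟩
end

section
/- Let G be a P_8-free bipartite graph with an efficient dominating set D, let D_basis ⊆ D be nonempty with distance levels N_i. Then no vertex u ∈ N_2 is the endpoint of an induced path (w_1, ..., w_6, u) on 7 vertices with w_1, ..., w_5 ∈ N_0 ∪ N_1 and w_6 ∈ N_1. -/
open SimpleGraph

variable {V : Type*}

section Aux

variable (G : SimpleGraph V) (S : Set V)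

lemma distToSet_le {d v : V} (hd : d ∈ S) : distToSet G S v ≤ G.edist v d :=
  sInf_le ⟨d, hd, rfl⟩

lemma distToSet_attained (hne : S.Nonempty) (v : V) :
    ∃ d ∈ S, G.edist v d = distToSet G S v := by
  have h := csInf_mem (hne.image (fun d => G.edist v d))
  obtain ⟨d, hd, he⟩ := h
  exact ⟨d, hd, he⟩

lemma distToSet_adj_le {v w : V} (hne : S.Nonempty) (h : G.Adj v w) :
    distToSet G S w ≤ distToSet G S v + 1 := by
  obtain ⟨d, hd, he⟩ := distToSet_attained G S hne v
  calc distToSet G S w ≤ G.edist w d := distToSet_le G S hd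
    _ ≤ G.edist w v + G.edist v d := SimpleGraph.edist_triangle
    _ = 1 + distToSet G S v := by
        rw [he, SimpleGraph.edist_eq_one_iff_adj.mpr h.symm]
    _ = distToSet G S v + 1 := add_comm _ _

lemma distToSet_of_mem {d : V} (hd : d ∈ S) : distToSet G S d = 0 :=
  le_antisymm (by simpa [SimpleGraph.edist_self] using distToSet_le G S (v := d) hd)
    zero_le

/-- A vertex of level 2 has a level-1 neighbor which is adjacent to a vertex of `S`. -/
lemma lvl_two_structure (hne : S.Nonempty) {v : V} (hv : v ∈ lvl G S 2) :
    ∃ w d, d ∈ S ∧ G.Adj v w ∧ G.Adj w d ∧ w ∈ lvl G S 1 := by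
  obtain ⟨d, hd, he⟩ := distToSet_attained G S hne v
  rw [hv] at he
  obtain ⟨p, hp⟩ := SimpleGraph.exists_walk_of_edist_eq_coe (k := 2) (by exact_mod_cast he)
  refine ⟨p.getVert 1, d, hd, ?_, ?_, ?_⟩
  · have := p.adj_getVert_succ (i := 0) (by omega)
    simpa using this
  · have := p.adj_getVert_succ (i := 1) (by omega)
    rw [show (1 + 1 : ℕ) = p.length by omega] at this
    simpa [p.getVert_length] using this
  · have hadj2 : G.Adj (p.getVert 1) d := by
      have := p.adj_getVert_succ (i := 1) (by omega)
      rw [show (1 + 1 : ℕ) = p.length by omega] at this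
      simpa [p.getVert_length] using this
    have hle : distToSet G S (p.getVert 1) ≤ 1 := by
      have := distToSet_le G S (v := p.getVert 1) hd
      rwa [SimpleGraph.edist_eq_one_iff_adj.mpr hadj2] at this
    have hadj1 : G.Adj v (p.getVert 1) := by
      have := p.adj_getVert_succ (i := 0) (by omega)
      simpa using this
    have hge : (1 : ℕ∞) ≤ distToSet G S (p.getVert 1) := by
      by_contra hlt
      push_neg at hlt
      have h0 : distToSet G S (p.getVert 1) = 0 := by
        exact ENat.lt_one_iff_eq_zero.mp hlt
      have := distToSet_adj_le G S hne hadj1.symm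
      rw [h0] at this
      have h2 : distToSet G S v = 2 := hv
      rw [h2] at this
      norm_num at this
    exact le_antisymm hle hge

/-- No `D`-vertex lies in level 1. -/
lemma not_mem_D_lvl_one {D : Set V} (hD : IsEDS G D) (hsub : S ⊆ D) {v : V}
    (hvD : v ∈ D) (hv : v ∈ lvl G S 1) : False := by
  have hne : S.Nonempty := by
    by_contra h
    rw [Set.not_nonempty_iff_eq_empty] at h
    simp [lvl, distToSet, h] at hv
  obtain ⟨d, hd, he⟩ := distToSet_attained G S hne v
  rw [hv] at he
  have hadj : G.Adj v d := SimpleGraph.edist_eq_one_iff_adj.mp he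
  obtain ⟨d0, _, huniq⟩ := hD v
  have h1 : v = d0 := huniq v ⟨hvD, Set.mem_insert _ _⟩
  have h2 : d = d0 := huniq d ⟨hsub hd, Set.mem_insert_of_mem _ hadj⟩
  have : v ∈ S := by rw [h1, ← h2]; exact hd
  have := distToSet_of_mem G S this
  rw [hv] at this
  norm_num at this

/-- No `D`-vertex lies in level 2. -/
lemma not_mem_D_lvl_two {D : Set V} (hD : IsEDS G D) (hsub : S ⊆ D) (hne : S.Nonempty)
    {v : V} (hvD : v ∈ D) (hv : v ∈ lvl G S 2) : False := by
  obtain ⟨w, d, hd, hvw, hwd, _⟩ := lvl_two_structure G S hne hv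
  obtain ⟨d0, _, huniq⟩ := hD w
  have h1 : v = d0 := huniq v ⟨hvD, Set.mem_insert_of_mem _ hvw.symm⟩
  have h2 : d = d0 := huniq d ⟨hsub hd, Set.mem_insert_of_mem _ hwd⟩
  have : v ∈ S := by rw [h1, ← h2]; exact hd
  have := distToSet_of_mem G S this
  rw [hv] at this
  norm_num at this

end Aux

/-- no vertex `u ∈ N₂` is the endpoint of an induced `P₇`
`(w₁,…,w₆,u)` with `w₁,…,w₅ ∈ N₀ ∪ N₁` and `w₆ ∈ N₁`. -/
theorem stmt_7 [Fintype V] (G : SimpleGraph V) (X Y : Set V)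
    (hbip : Bipartition G X Y) (hP8 : P8Free G)
    (D Dbasis : Set V) (hD : IsEDS G D) (hsub : Dbasis ⊆ D)
    (hne : Dbasis.Nonempty) {u : V} (hu : u ∈ lvl G Dbasis 2) :
    ¬ ∃ p : Fin 7 → V, IsInducedPath G p ∧ p 6 = u ∧
        (∀ i : Fin 7, i.val ≤ 4 → p i ∈ lvl G Dbasis 0 ∪ lvl G Dbasis 1) ∧
        p 5 ∈ lvl G Dbasis 1 := by
  rintro ⟨p, ⟨hinj, hadj⟩, hp6, hlow, hp5⟩
  -- the unique D-vertex dominating u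
  obtain ⟨d, ⟨hdD, hdN⟩, _⟩ := hD u
  have hdu : d ≠ u := by
    intro h
    exact not_mem_D_lvl_two G Dbasis hD hsub hne (h ▸ hdD) hu
  have hadj_ud : G.Adj u d := by
    rcases hdN with h | h
    · exact absurd h hdu
    · exact (SimpleGraph.mem_neighborSet _ _ _).mp h
  -- distToSet of d is 3
  have hd_le : distToSet G Dbasis d ≤ 3 := by
    have := distToSet_adj_le G Dbasis hne hadj_ud
    rw [hu] at this
    exact le_trans this (by norm_num)
  have hd_ne0 : distToSet G Dbasis d ≠ 0 := by
    intro h0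
    have := distToSet_adj_le G Dbasis hne hadj_ud.symm
    rw [h0, hu] at this
    norm_num at this
  have hd_ne1 : distToSet G Dbasis d ≠ 1 := fun h1 =>
    not_mem_D_lvl_one G Dbasis hD hsub hdD h1
  have hd_ne2 : distToSet G Dbasis d ≠ 2 := fun h2 =>
    not_mem_D_lvl_two G Dbasis hD hsub hne hdD h2
  have hd3 : distToSet G Dbasis d = 3 := by
    have hlt : distToSet G Dbasis d ≠ ⊤ := by
      intro h; rw [h] at hd_le; exact absurd hd_le (by norm_num)
    lift distToSet G Dbasis d to ℕ using hlt with n hn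
    have h3 : n ≤ 3 := by exact_mod_cast hd_le
    have h0 : n ≠ 0 := by exact_mod_cast hd_ne0
    have h1' : n ≠ 1 := by exact_mod_cast hd_ne1
    have h2' : n ≠ 2 := by exact_mod_cast hd_ne2
    have : n = 3 := by omega
    exact_mod_cast this
  -- distToSet of p i for i ≤ 5 is at most 1
  have hplow : ∀ i : Fin 7, i.val ≤ 5 → distToSet G Dbasis (p i) ≤ 1 := by
    intro i hi
    rcases Nat.lt_or_ge i.val 5 with h5 | h5
    · rcases hlow i (by omega) with h | h
      · rw [h]; norm_num
      · rw [h]; exact_mod_cast le_refl (1 : ℕ∞)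
    · have : i = 5 := Fin.ext (by omega)
      rw [this, hp5]; exact_mod_cast le_refl (1 : ℕ∞)
  -- d is not adjacent to and distinct from p i for i ≤ 5
  have hd_nadj : ∀ i : Fin 7, i.val ≤ 5 → ¬ G.Adj d (p i) := by
    intro i hi hA
    have := distToSet_adj_le G Dbasis hne hA.symm
    rw [hd3] at this
    have := le_trans this (by
      have := hplow i hi
      exact add_le_add_left this 1)
    norm_num at this
  have hd_ne : ∀ i : Fin 7, d ≠ p i := by
    intro i h
    rcases Nat.lt_or_ge i.val 6 with h6 | h6
    · have := hplow i (by omega)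
      rw [← h, hd3] at this
      norm_num at this
    · have : i = 6 := Fin.ext (by omega)
      rw [this, hp6] at h
      exact hdu h
  -- build an induced P8
  set q : Fin 8 → V := fun i => if h : i.val < 7 then p ⟨i.val, h⟩ else d with hq
  have hq_lt : ∀ (i : Fin 8) (h : i.val < 7), q i = p ⟨i.val, h⟩ := by
    intro i h; simp [hq, h]
  have hq_last : q 7 = d := by rw [hq]; exact dif_neg (by decide)
  apply hP8 q
  constructor
  · intro i j hij
    rcases Nat.lt_or_ge i.val 7 with hi | hi <;> rcases Nat.lt_or_ge j.val 7 with hj | hj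
    · rw [hq_lt i hi, hq_lt j hj] at hij
      have := hinj hij
      exact Fin.ext (by simpa using congrArg Fin.val this)
    · rw [hq_lt i hi] at hij
      have hj7 : j = 7 := Fin.ext (by omega)
      rw [hj7, hq_last] at hij
      exact absurd hij.symm (hd_ne _)
    · rw [hq_lt j hj] at hij
      have hi7 : i = 7 := Fin.ext (by omega)
      rw [hi7, hq_last] at hij
      exact absurd hij (hd_ne _)
    · exact Fin.ext (by omega)
  · intro i j
    rcases Nat.lt_or_ge i.val 7 with hi | hi <;> rcases Nat.lt_or_ge j.val 7 with hj | hj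
    · rw [hq_lt i hi, hq_lt j hj]
      rw [hadj ⟨i.val, hi⟩ ⟨j.val, hj⟩]
    · have hj7 : j = 7 := Fin.ext (by omega)
      rw [hq_lt i hi, hj7, hq_last]
      constructor
      · intro hA
        by_contra hC
        push_neg at hC
        have hi6 : i.val ≤ 5 := by omega
        exact hd_nadj ⟨i.val, hi⟩ hi6 hA.symm
      · intro hor
        have h7 : ((7 : Fin 8) : ℕ) = 7 := rfl
        rw [h7] at hor
        have hi6 : i.val = 6 := by omega
        have : (⟨i.val, hi⟩ : Fin 7) = 6 := Fin.ext (by simp [hi6])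
        rw [this, hp6]
        exact hadj_ud
    · have hi7 : i = 7 := Fin.ext (by omega)
      rw [hq_lt j hj, hi7, hq_last]
      constructor
      · intro hA
        by_contra hC
        push_neg at hC
        have hj6 : j.val ≤ 5 := by omega
        exact hd_nadj ⟨j.val, hj⟩ hj6 hA
      · intro hor
        have h7 : ((7 : Fin 8) : ℕ) = 7 := rfl
        rw [h7] at hor
        have hj6 : j.val = 6 := by omega
        have : (⟨j.val, hj⟩ : Fin 7) = 6 := Fin.ext (by simp [hj6])
        rw [this, hp6]
        exact hadj_ud.symm
    · have hi7 : i = 7 := Fin.ext (by omega)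
      have hj7 : j = 7 := Fin.ext (by omega)
      rw [hi7, hj7, hq_last]
      simp
end

section
/- Let G be a P_8-free bipartite graph with an efficient dominating set D and distance levels N_i of a nonempty D_basis ⊆ D. Suppose every vertex of N_2 is an endpoint of an induced P_5 whose remaining four vertices lie in N_0 ∪ N_1. Then no vertex of N_2 is an endpoint of an induced P_4 whose remaining three vertices lie in ∪_{i ≥ 3} N_i. -/
open SimpleGraph

variable {V : Type*}

/-- In `ℕ∞`, the distance to a set is attained on some element of the set
(when it is a finite natural number). -/
lemma lvl_attained {G : SimpleGraph V} {S : Set V} {i : ℕ} {v : V}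
    (h : v ∈ lvl G S i) : ∃ d ∈ S, G.edist v d = (i : ℕ∞) := by
  have h1 : sInf ((fun d => G.edist v d) '' S) = (i : ℕ∞) := h
  have h2 : ¬ ((i : ℕ∞) + 1 ≤ sInf ((fun d => G.edist v d) '' S)) := by
    rw [h1]
    intro hle
    have : (i : ℕ∞) < (i : ℕ∞) + 1 := (ENat.lt_add_one_iff (by simp)).mpr le_rfl
    exact absurd (hle.trans_lt' this) (lt_irrefl _)
  rw [le_sInf_iff] at h2
  push_neg at h2
  obtain ⟨t, ht, hlt⟩ := h2
  obtain ⟨d, hd, rfl⟩ := ht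
  refine ⟨d, hd, le_antisymm ((ENat.lt_add_one_iff (by simp)).mp hlt) ?_⟩
  rw [← h1]; exact sInf_le ⟨d, hd, rfl⟩

/-- Adjacent vertices lie in consecutive (or equal) levels. -/
lemma adj_lvl_le {G : SimpleGraph V} {S : Set V} {i j : ℕ} {a b : V}
    (ha : a ∈ lvl G S i) (hb : b ∈ lvl G S j) (hadj : G.Adj a b) :
    j ≤ i + 1 := by
  obtain ⟨d, hd, hde⟩ := lvl_attained ha
  have h1 : G.edist b d ≤ G.edist b a + G.edist a d := SimpleGraph.edist_triangle
  have h2 : G.edist b a ≤ 1 := le_of_eq (edist_eq_one_iff_adj.mpr hadj.symm)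
  have h3 : distToSet G S b ≤ (i : ℕ∞) + 1 := by
    calc distToSet G S b ≤ G.edist b d := sInf_le ⟨d, hd, rfl⟩
    _ ≤ 1 + (i : ℕ∞) := by rw [← hde]; exact h1.trans (add_le_add h2 le_rfl)
    _ = (i : ℕ∞) + 1 := add_comm _ _
  have hb' : distToSet G S b = (j : ℕ∞) := hb
  rw [hb'] at h3
  exact_mod_cast h3

/-- Vertices in distinct levels are distinct. -/
lemma lvl_ne {G : SimpleGraph V} {S : Set V} {i j : ℕ} {a b : V}
    (ha : a ∈ lvl G S i) (hb : b ∈ lvl G S j) (hij : i ≠ j) : a ≠ b := by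
  rintro rfl
  have := ha.symm.trans hb
  exact hij (by exact_mod_cast this)

/-- if every vertex of `N₂` is the endpoint of an induced `P₅`
whose remaining vertices are in `N₀ ∪ N₁`, then no vertex of `N₂` is the
endpoint of an induced `P₄` whose remaining vertices lie in `⋃_{i ≥ 3} Nᵢ`. -/
theorem stmt_8 [Fintype V] (G : SimpleGraph V) (X Y : Set V)
    (hbip : Bipartition G X Y) (hP8 : P8Free G)
    (D Dbasis : Set V) (hD : IsEDS G D) (hsub : Dbasis ⊆ D)
    (hne : Dbasis.Nonempty)
    (hP5 : ∀ u ∈ lvl G Dbasis 2, ∃ p : Fin 5 → V, IsInducedPath G p ∧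
        p 4 = u ∧ ∀ i : Fin 5, i.val ≤ 3 → p i ∈ lvl G Dbasis 0 ∪ lvl G Dbasis 1) :
    ¬ ∃ u ∈ lvl G Dbasis 2, ∃ q : Fin 4 → V, IsInducedPath G q ∧ q 0 = u ∧
        ∀ j : Fin 4, 1 ≤ j.val → ∃ i : ℕ, 3 ≤ i ∧ q j ∈ lvl G Dbasis i := by
  rintro ⟨u, hu2, q, hq, hq0, hql⟩
  obtain ⟨p, hp, hp4, hplev⟩ := hP5 u hu2
  have e : p 4 = q 0 := by rw [hp4, hq0]
  -- level facts
  have hpl : ∀ i : Fin 5, i.val ≤ 3 → ∃ l, l ≤ 1 ∧ p i ∈ lvl G Dbasis l := by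
    intro i hi
    rcases hplev i hi with h | h
    · exact ⟨0, by norm_num, h⟩
    · exact ⟨1, by norm_num, h⟩
  have hp4lvl : p 4 ∈ lvl G Dbasis 2 := by rw [hp4]; exact hu2
  have hpl' : ∀ i : Fin 5, ∃ l, l ≤ 2 ∧ p i ∈ lvl G Dbasis l := by
    intro i
    by_cases hi : i.val ≤ 3
    · obtain ⟨l, hl, h⟩ := hpl i hi
      exact ⟨l, by omega, h⟩
    · have hi4 : i = 4 := by
        have := i.isLt; apply Fin.ext; show i.val = 4; omega
      subst hi4
      exact ⟨2, le_rfl, hp4lvl⟩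
  -- cross non-adjacency (first four `p`-vertices vs nontrivial `q`-vertices)
  have ncross : ∀ i : Fin 5, i.val ≤ 3 → ∀ j : Fin 4, 1 ≤ j.val →
      ¬ G.Adj (p i) (q j) := by
    intro i hi j hj h
    obtain ⟨li, hli, hpi⟩ := hpl i hi
    obtain ⟨lj, hlj, hqj⟩ := hql j hj
    have := adj_lvl_le hpi hqj h
    omega
  -- cross distinctness (all `p`-vertices vs nontrivial `q`-vertices)
  have necross : ∀ (i : Fin 5) (j : Fin 4), 1 ≤ j.val → p i ≠ q j := by
    intro i j hj
    obtain ⟨li, hli, hpi⟩ := hpl' i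
    obtain ⟨lj, hlj, hqj⟩ := hql j hj
    exact lvl_ne hpi hqj (by omega)
  have pne : ∀ i j : Fin 5, i ≠ j → p i ≠ p j := fun i j hij h => hij (hp.1 h)
  have qne : ∀ i j : Fin 4, i ≠ j → q i ≠ q j := fun i j hij h => hij (hq.1 h)
  -- positive adjacencies along the concatenated path
  have a01 : G.Adj (p 0) (p 1) := (hp.2 0 1).mpr (by decide)
  have a12 : G.Adj (p 1) (p 2) := (hp.2 1 2).mpr (by decide)
  have a23 : G.Adj (p 2) (p 3) := (hp.2 2 3).mpr (by decide)
  have a34 : G.Adj (p 3) (p 4) := (hp.2 3 4).mpr (by decide)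
  have a45 : G.Adj (p 4) (q 1) := by rw [e]; exact (hq.2 0 1).mpr (by decide)
  have a56 : G.Adj (q 1) (q 2) := (hq.2 1 2).mpr (by decide)
  have a67 : G.Adj (q 2) (q 3) := (hq.2 2 3).mpr (by decide)
  -- negative adjacencies
  have n02 : ¬ G.Adj (p 0) (p 2) := fun h => absurd ((hp.2 0 2).mp h) (by decide)
  have n03 : ¬ G.Adj (p 0) (p 3) := fun h => absurd ((hp.2 0 3).mp h) (by decide)
  have n04 : ¬ G.Adj (p 0) (p 4) := fun h => absurd ((hp.2 0 4).mp h) (by decide)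
  have n13 : ¬ G.Adj (p 1) (p 3) := fun h => absurd ((hp.2 1 3).mp h) (by decide)
  have n14 : ¬ G.Adj (p 1) (p 4) := fun h => absurd ((hp.2 1 4).mp h) (by decide)
  have n24 : ¬ G.Adj (p 2) (p 4) := fun h => absurd ((hp.2 2 4).mp h) (by decide)
  have n46 : ¬ G.Adj (p 4) (q 2) := by
    rw [e]; exact fun h => absurd ((hq.2 0 2).mp h) (by decide)
  have n47 : ¬ G.Adj (p 4) (q 3) := by
    rw [e]; exact fun h => absurd ((hq.2 0 3).mp h) (by decide)
  have n57 : ¬ G.Adj (q 1) (q 3) := fun h => absurd ((hq.2 1 3).mp h) (by decide)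
  have n05 : ¬ G.Adj (p 0) (q 1) := ncross 0 (by decide) 1 (by decide)
  have n06 : ¬ G.Adj (p 0) (q 2) := ncross 0 (by decide) 2 (by decide)
  have n07 : ¬ G.Adj (p 0) (q 3) := ncross 0 (by decide) 3 (by decide)
  have n15 : ¬ G.Adj (p 1) (q 1) := ncross 1 (by decide) 1 (by decide)
  have n16 : ¬ G.Adj (p 1) (q 2) := ncross 1 (by decide) 2 (by decide)
  have n17 : ¬ G.Adj (p 1) (q 3) := ncross 1 (by decide) 3 (by decide)
  have n25 : ¬ G.Adj (p 2) (q 1) := ncross 2 (by decide) 1 (by decide)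
  have n26 : ¬ G.Adj (p 2) (q 2) := ncross 2 (by decide) 2 (by decide)
  have n27 : ¬ G.Adj (p 2) (q 3) := ncross 2 (by decide) 3 (by decide)
  have n35 : ¬ G.Adj (p 3) (q 1) := ncross 3 (by decide) 1 (by decide)
  have n36 : ¬ G.Adj (p 3) (q 2) := ncross 3 (by decide) 2 (by decide)
  have n37 : ¬ G.Adj (p 3) (q 3) := ncross 3 (by decide) 3 (by decide)
  -- build the induced P8 and contradict P8-freeness
  refine hP8 ![p 0, p 1, p 2, p 3, p 4, q 1, q 2, q 3] ⟨?_, ?_⟩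
  · intro i j h
    fin_cases i <;> fin_cases j <;>
      first
        | rfl
        | exact absurd h (pne _ _ (by decide))
        | exact absurd h (qne _ _ (by decide))
        | exact absurd h (necross _ _ (by decide))
        | exact absurd h.symm (necross _ _ (by decide))
  · intro i j
    fin_cases i <;> fin_cases j <;>
      first
        | exact iff_of_false (G.irrefl) (by decide)
        | exact iff_of_true (by assumption) (by decide)
        | exact iff_of_true (G.adj_symm (by assumption)) (by decide)
        | exact iff_of_false (by assumption) (by decide)
        | exact iff_of_false (fun hh => absurd hh.symm (by assumption)) (by decide)
end

section
/- Under the setup where N_5 = ∅, N_4 independent, edges in N_3 do not contact N_4, and D ∩ N_2 = ∅: if v_1, v_2 ∈ N_3 with N(v_1) ∩ N_4 = N(v_2) ∩ N_4 ⊇ {w_i, w_j} for distinct w_i, w_j ∈ N_4 with N(w_i) ∩ N_3 = N(w_j) ∩ N_3 = {v_1, v_2}, then G has no efficient dominating set D containing D_basis. -/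
open SimpleGraph

variable {V : Type*}

/-!
Each `D`-vertex is at distance at least 3 from every other one. Neither `v₁` nor `v₂` can lie
in `D`: if `v₁ ∈ D`, the vertex dominating `v₂` is neither `v₂` (it would share the neighbour `wᵢ`
with `v₁`) nor in `N₂` or `N₃`, so it lies in `N(v₂) ∩ N₄ = N(v₁) ∩ N₄` and is a second `D`-vertex
next to `v₁`. Since the neighbours of `wᵢ` and `wⱼ` are exactly `v₁, v₂`, both must then dominate
themselves, and `wᵢ, wⱼ ∈ D` are two `D`-vertices adjacent to `v₁`.
-/

section

variable {G : SimpleGraph V}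

theorem self_mem_closedNbhd (v : V) : v ∈ closedNbhd G v := Set.mem_insert v _

theorem mem_closedNbhd_of_adj {u v : V} (h : G.Adj u v) : v ∈ closedNbhd G u :=
  Set.mem_insert_of_mem u h

theorem mem_closedNbhd_iff {u v : V} : v ∈ closedNbhd G u ↔ v = u ∨ G.Adj u v :=
  Set.mem_insert_iff

theorem IsEDS.eq_of_mem_closedNbhd {D : Set V} (hD : IsEDS G D) {u d d' : V} (hd : d ∈ D)
    (hd' : d' ∈ D) (hdu : d ∈ closedNbhd G u) (hd'u : d' ∈ closedNbhd G u) : d = d' :=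
  (hD u).unique ⟨hd, hdu⟩ ⟨hd', hd'u⟩

section Levels

variable {S : Set V}

theorem exists_edist_eq_distToSet (hS : S.Nonempty) (v : V) :
    ∃ d ∈ S, G.edist v d = distToSet G S v :=
  csInf_mem (hS.image _)

theorem distToSet_le_distToSet_add_one_of_adj {u v : V} (h : G.Adj u v) :
    distToSet G S u ≤ distToSet G S v + 1 := by
  rcases S.eq_empty_or_nonempty with rfl | hS
  · simp [distToSet]
  obtain ⟨d, hd, hvd⟩ := exists_edist_eq_distToSet (G := G) hS v
  calc distToSet G S u ≤ G.edist u d := sInf_le ⟨d, hd, rfl⟩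
    _ ≤ G.edist u v + G.edist v d := G.edist_triangle
    _ = distToSet G S v + 1 := by rw [edist_eq_one_iff_adj.mpr h, hvd, add_comm]

theorem ne_of_mem_lvl {a b : V} {n m : ℕ} (ha : a ∈ lvl G S n) (hb : b ∈ lvl G S m)
    (hnm : n ≠ m) : a ≠ b := by
  rintro rfl
  exact hnm (by exact_mod_cast ha.symm.trans hb)

theorem exists_mem_lvl_of_adj {u v : V} {n : ℕ} (hu : u ∈ lvl G S n) (h : G.Adj u v) :
    ∃ m : ℕ, v ∈ lvl G S m ∧ n ≤ m + 1 ∧ m ≤ n + 1 := by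
  have hvu := distToSet_le_distToSet_add_one_of_adj (S := S) h.symm
  have huv := distToSet_le_distToSet_add_one_of_adj (S := S) h
  rw [show distToSet G S u = n from hu] at hvu huv
  obtain ⟨m, hm⟩ := ENat.ne_top_iff_exists.mp (ne_top_of_le_ne_top (by simp) hvu)
  rw [← hm] at hvu huv
  exact ⟨m, hm.symm, by exact_mod_cast huv, by exact_mod_cast hvu⟩

theorem mem_lvl_three_of_adj (hN5 : lvl G S 5 = ∅)
    (hN4indep : ∀ a b : V, a ∈ lvl G S 4 → b ∈ lvl G S 4 → ¬ G.Adj a b)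
    {w v : V} (hw : w ∈ lvl G S 4) (hwv : G.Adj w v) : v ∈ lvl G S 3 := by
  obtain ⟨m, hm, h₁, h₂⟩ := exists_mem_lvl_of_adj hw hwv
  obtain rfl | rfl | rfl : m = 3 ∨ m = 4 ∨ m = 5 := by omega
  · exact hm
  · exact absurd hwv (hN4indep w v hw hm)
  · simp [hN5] at hm

theorem mem_lvl_four_of_adj
    (hN3edge : ∀ a b c : V, a ∈ lvl G S 3 → b ∈ lvl G S 3 → G.Adj a b →
        c ∈ lvl G S 4 → ¬ G.Adj a c)
    {v w d : V} (hv : v ∈ lvl G S 3) (hw : w ∈ lvl G S 4) (hvw : G.Adj v w)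
    (hvd : G.Adj v d) (hd : d ∉ lvl G S 2) : d ∈ lvl G S 4 := by
  obtain ⟨m, hm, h₁, h₂⟩ := exists_mem_lvl_of_adj hv hvd
  obtain rfl | rfl | rfl : m = 2 ∨ m = 3 ∨ m = 4 := by omega
  · exact absurd hm hd
  · exact absurd hvw (hN3edge v d w hv hm hvd hw)
  · exact hm

end Levels

namespace IsEDS

variable {S D : Set V}

theorem mem_of_mem_lvl_four (hD : IsEDS G D) (hN5 : lvl G S 5 = ∅)
    (hN4indep : ∀ a b : V, a ∈ lvl G S 4 → b ∈ lvl G S 4 → ¬ G.Adj a b)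
    {w : V} (hw : w ∈ lvl G S 4) (hNw : ∀ v ∈ G.neighborSet w ∩ lvl G S 3, v ∉ D) :
    w ∈ D := by
  obtain ⟨d, ⟨hdD, hdw⟩, -⟩ := hD w
  rcases mem_closedNbhd_iff.mp hdw with rfl | hwd
  · exact hdD
  · exact absurd hdD (hNw d ⟨hwd, mem_lvl_three_of_adj hN5 hN4indep hw hwd⟩)

theorem notMem_of_neighborSet_inter_lvl_four_subset (hD : IsEDS G D)
    (hN3edge : ∀ a b c : V, a ∈ lvl G S 3 → b ∈ lvl G S 3 → G.Adj a b →
        c ∈ lvl G S 4 → ¬ G.Adj a c)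
    (hD2 : ∀ d ∈ D, d ∉ lvl G S 2)
    {a b w : V} (ha : a ∈ lvl G S 3) (hb : b ∈ lvl G S 3) (hab : a ≠ b) (hw : w ∈ lvl G S 4)
    (hwa : G.Adj w a) (hwb : G.Adj w b)
    (hN : G.neighborSet b ∩ lvl G S 4 ⊆ G.neighborSet a) : a ∉ D := by
  intro haD
  obtain ⟨e, ⟨heD, heb⟩, -⟩ := hD b
  rcases mem_closedNbhd_iff.mp heb with rfl | hbe
  · exact hab (hD.eq_of_mem_closedNbhd haD heD (mem_closedNbhd_of_adj hwa)
      (mem_closedNbhd_of_adj hwb))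
  · have he4 : e ∈ lvl G S 4 := mem_lvl_four_of_adj hN3edge hb hw hwb.symm hbe (hD2 e heD)
    exact ne_of_mem_lvl ha he4 (by norm_num) (hD.eq_of_mem_closedNbhd haD heD
      (self_mem_closedNbhd a) (mem_closedNbhd_of_adj (hN ⟨hbe, he4⟩)))

end IsEDS

end

theorem stmt_13_general (G : SimpleGraph V)
    (Dbasis : Set V)
    (hN5 : lvl G Dbasis 5 = ∅)
    (hN4indep : ∀ a b : V, a ∈ lvl G Dbasis 4 → b ∈ lvl G Dbasis 4 → ¬ G.Adj a b)
    (hN3edge : ∀ a b c : V, a ∈ lvl G Dbasis 3 → b ∈ lvl G Dbasis 3 → G.Adj a b →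
        c ∈ lvl G Dbasis 4 → ¬ G.Adj a c)
    (hexcl : ∀ D : Set V, IsEDS G D → Dbasis ⊆ D →
        D ∩ (lvl G Dbasis 1 ∪ lvl G Dbasis 2) = ∅)
    {v₁ v₂ wi wj : V} (hv₁ : v₁ ∈ lvl G Dbasis 3) (hv₂ : v₂ ∈ lvl G Dbasis 3)
    (hne12 : v₁ ≠ v₂) (hwij : wi ≠ wj)
    (hwi4 : wi ∈ lvl G Dbasis 4) (hwj4 : wj ∈ lvl G Dbasis 4)
    (heqN4 : G.neighborSet v₁ ∩ lvl G Dbasis 4 = G.neighborSet v₂ ∩ lvl G Dbasis 4)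
    (hwi1 : wi ∈ G.neighborSet v₁) (hwj1 : wj ∈ G.neighborSet v₁)
    (hNwi : G.neighborSet wi ∩ lvl G Dbasis 3 = {v₁, v₂})
    (hNwj : G.neighborSet wj ∩ lvl G Dbasis 3 = {v₁, v₂}) :
    ¬ ∃ D : Set V, IsEDS G D ∧ Dbasis ⊆ D := by
  rintro ⟨D, hD, hDb⟩
  have hD2 : ∀ d ∈ D, d ∉ lvl G Dbasis 2 := fun d hd h2 =>
    (Set.eq_empty_iff_forall_notMem.mp (hexcl D hD hDb)) d ⟨hd, Or.inr h2⟩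
  have hwiv₂ : G.Adj wi v₂ := (hNwi.symm ▸ Set.mem_insert_of_mem v₁ rfl :
    v₂ ∈ G.neighborSet wi ∩ lvl G Dbasis 3).1
  have hv₁D : v₁ ∉ D := hD.notMem_of_neighborSet_inter_lvl_four_subset hN3edge hD2 hv₁ hv₂
    hne12 hwi4 hwi1.symm hwiv₂ (heqN4.symm.subset.trans Set.inter_subset_left)
  have hv₂D : v₂ ∉ D := hD.notMem_of_neighborSet_inter_lvl_four_subset hN3edge hD2 hv₂ hv₁
    hne12.symm hwi4 hwiv₂ hwi1.symm (heqN4.subset.trans Set.inter_subset_left)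
  have hw_mem : ∀ w ∈ lvl G Dbasis 4, G.neighborSet w ∩ lvl G Dbasis 3 = {v₁, v₂} → w ∈ D :=
    fun w hw hNw => hD.mem_of_mem_lvl_four hN5 hN4indep hw fun v hv => by
      rw [hNw] at hv
      rcases hv with rfl | rfl <;> assumption
  exact hwij (hD.eq_of_mem_closedNbhd (hw_mem wi hwi4 hNwi) (hw_mem wj hwj4 hNwj)
    (mem_closedNbhd_of_adj hwi1) (mem_closedNbhd_of_adj hwj1))

/-- under the standing assumptions, if `v₁ ≠ v₂` in `N₃` have the
same neighborhood in `N₄` containing distinct `wᵢ, wⱼ` with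
`N(wᵢ) ∩ N₃ = N(wⱼ) ∩ N₃ = {v₁, v₂}`, then `G` has no e.d.s. containing
`D_basis`. -/
theorem stmt_13 [Fintype V] (G : SimpleGraph V) (X Y : Set V)
    (hbip : Bipartition G X Y) (hP8 : P8Free G)
    (Dbasis : Set V) (hne : Dbasis.Nonempty)
    (hN5 : lvl G Dbasis 5 = ∅)
    (hN4indep : ∀ a b : V, a ∈ lvl G Dbasis 4 → b ∈ lvl G Dbasis 4 → ¬ G.Adj a b)
    (hN3edge : ∀ a b c : V, a ∈ lvl G Dbasis 3 → b ∈ lvl G Dbasis 3 → G.Adj a b →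
        c ∈ lvl G Dbasis 4 → ¬ G.Adj a c)
    (hexcl : ∀ D : Set V, IsEDS G D → Dbasis ⊆ D →
        D ∩ (lvl G Dbasis 1 ∪ lvl G Dbasis 2) = ∅)
    {v₁ v₂ wi wj : V} (hv₁ : v₁ ∈ lvl G Dbasis 3) (hv₂ : v₂ ∈ lvl G Dbasis 3)
    (hne12 : v₁ ≠ v₂) (hwij : wi ≠ wj)
    (hwi4 : wi ∈ lvl G Dbasis 4) (hwj4 : wj ∈ lvl G Dbasis 4)
    (heqN4 : G.neighborSet v₁ ∩ lvl G Dbasis 4 = G.neighborSet v₂ ∩ lvl G Dbasis 4)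
    (hwi1 : wi ∈ G.neighborSet v₁) (hwj1 : wj ∈ G.neighborSet v₁)
    (hNwi : G.neighborSet wi ∩ lvl G Dbasis 3 = {v₁, v₂})
    (hNwj : G.neighborSet wj ∩ lvl G Dbasis 3 = {v₁, v₂}) :
    ¬ ∃ D : Set V, IsEDS G D ∧ Dbasis ⊆ D :=
  stmt_13_general G Dbasis hN5 hN4indep hN3edge hexcl hv₁ hv₂ hne12 hwij hwi4 hwj4 heqN4 hwi1 hwj1
    hNwi hNwj
end

section
/- Under the assumption that no vertex of N_2 is an endpoint of an induced P_4 whose remaining vertices lie in ∪_{i≥3}N_i: for every connected component Q of the subgraph induced on N_3 ∪ N_4 and every vertex u ∈ N_2 adjacent to some vertex of Q, u is adjacent to all vertices of Q ∩ N_3 lying in the opposite part of the bipartition from u. -/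
open SimpleGraph

variable {V : Type*}

section Aux

variable {G : SimpleGraph V} {Dbasis : Set V}

lemma distToSet_le_adj (hne : Dbasis.Nonempty) {a b : V} (hab : G.Adj a b) :
    distToSet G Dbasis b ≤ distToSet G Dbasis a + 1 := by
  have himg : ((fun d => G.edist a d) '' Dbasis).Nonempty := hne.image _
  obtain ⟨d, hd, hda⟩ := csInf_mem himg
  calc distToSet G Dbasis b ≤ G.edist b d := csInf_le (OrderBot.bddBelow _) ⟨d, hd, rfl⟩
    _ ≤ G.edist b a + G.edist a d := SimpleGraph.edist_triangle
    _ ≤ 1 + distToSet G Dbasis a := by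
        have hda' : G.edist a d = distToSet G Dbasis a := hda
        rw [← hda']
        gcongr
        rw [SimpleGraph.edist_comm]
        exact le_of_eq (SimpleGraph.edist_eq_one_iff_adj.2 hab)
    _ = distToSet G Dbasis a + 1 := add_comm _ _

lemma not_adj_lvl4 (hne : Dbasis.Nonempty) {a b : V} (ha : a ∈ lvl G Dbasis 2)
    (hab : G.Adj a b) (hb : b ∈ lvl G Dbasis 3 ∪ lvl G Dbasis 4) :
    b ∈ lvl G Dbasis 3 := by
  rcases hb with hb | hb
  · exact hb
  · exfalso
    have h := distToSet_le_adj hne hab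
    have ha' : distToSet G Dbasis a = 2 := ha
    have hb' : distToSet G Dbasis b = 4 := hb
    rw [ha', hb'] at h
    norm_num at h

lemma lvl2_notmem {a : V} (ha : a ∈ lvl G Dbasis 2) :
    a ∉ lvl G Dbasis 3 ∪ lvl G Dbasis 4 := by
  rintro (hb | hb)
  · have : (2 : ℕ∞) = 3 := (ha : distToSet G Dbasis a = 2).symm.trans hb
    norm_num at this
  · have : (2 : ℕ∞) = 4 := (ha : distToSet G Dbasis a = 2).symm.trans hb
    norm_num at this

/-- Key step: main induction along a walk in the induced subgraph. -/
lemma walk_adj {X Y : Set V} (hbip : Bipartition G X Y)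
    (hnoP4 : ¬ ∃ u ∈ lvl G Dbasis 2, ∃ q : Fin 4 → V, IsInducedPath G q ∧
        q 0 = u ∧ ∀ j : Fin 4, 1 ≤ j.val → ∃ i : ℕ, 3 ≤ i ∧ q j ∈ lvl G Dbasis i)
    (hne : Dbasis.Nonempty)
    {u : V} (hu : u ∈ lvl G Dbasis 2) (hux : u ∈ X)
    {a b : ↥(lvl G Dbasis 3 ∪ lvl G Dbasis 4)}
    (p : (G.induce (lvl G Dbasis 3 ∪ lvl G Dbasis 4)).Walk a b)
    (ha : ((a : V) ∈ Y ∧ G.Adj u a) ∨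
      ((a : V) ∈ X ∧ ∃ w : V, w ∈ Y ∧ w ∈ lvl G Dbasis 3 ∧ G.Adj u w ∧ G.Adj w a)) :
    ((b : V) ∈ Y ∧ G.Adj u b) ∨
      ((b : V) ∈ X ∧ ∃ w : V, w ∈ Y ∧ w ∈ lvl G Dbasis 3 ∧ G.Adj u w ∧ G.Adj w b) := by
  induction p with
  | nil => exact ha
  | @cons a c b h p ih =>
    apply ih
    have hac : G.Adj (a : V) (c : V) := h
    rcases ha with ⟨haY, hua⟩ | ⟨haX, w, hwY, hw3, huw, hwa⟩
    · -- a ∈ Y, u adj a; then c ∈ X, witness a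
      right
      have hcX : (c : V) ∈ X := by
        rcases hbip.adj hac with ⟨h1, h2⟩ | ⟨h1, h2⟩
        · exact absurd rfl (hbip.disj.ne_of_mem h1 haY)
        · exact h2
      have ha3 : (a : V) ∈ lvl G Dbasis 3 := not_adj_lvl4 hne hu hua a.2
      exact ⟨hcX, a, haY, ha3, hua, hac⟩
    · -- a ∈ X with witness w; c ∈ Y
      left
      have hcY : (c : V) ∈ Y := by
        rcases hbip.adj hac with ⟨h1, h2⟩ | ⟨h1, h2⟩
        · exact h2
        · exact absurd rfl (hbip.disj.ne_of_mem haX h1)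
      refine ⟨hcY, ?_⟩
      by_cases hwc : w = (c : V)
      · exact hwc ▸ huw
      by_contra huc
      apply hnoP4
      refine ⟨u, hu, ![u, w, (a : V), (c : V)], ⟨?_, ?_⟩, rfl, ?_⟩
      · -- injectivity
        have hu34 := lvl2_notmem hu
        have hw34 : w ∈ lvl G Dbasis 3 ∪ lvl G Dbasis 4 := Or.inl hw3
        have huX_neY : u ≠ w := fun h => hu34 (h ▸ hw34)
        have hua' : u ≠ (a : V) := fun h => hu34 (h ▸ a.2)
        have huc' : u ≠ (c : V) := fun h => hu34 (h ▸ c.2)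
        have hwa' : w ≠ (a : V) := G.ne_of_adj hwa
        have hac' : (a : V) ≠ (c : V) := G.ne_of_adj hac
        have h01 : u ≠ w := huX_neY
        have h02 : u ≠ (a : V) := hua'
        have h03 : u ≠ (c : V) := huc'
        have h12 : w ≠ (a : V) := hwa'
        have h13 : w ≠ (c : V) := hwc
        have h23 : (a : V) ≠ (c : V) := hac'
        intro i j hij
        fin_cases i <;> fin_cases j <;>
          simp only [Matrix.cons_val_zero, Matrix.cons_val_one, Matrix.head_cons,
            Matrix.cons_val_two, Matrix.tail_cons, Matrix.cons_val_three] at hij <;>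
          first
          | rfl
          | exact absurd hij (by assumption)
          | exact absurd hij.symm (by assumption)
      · -- adjacency pattern
        have hXYne : ∀ x y : V, x ∈ X → y ∈ X → ¬ G.Adj x y := by
          intro x y hx hy hxy
          rcases hbip.adj hxy with ⟨_, h2⟩ | ⟨h1, _⟩
          · exact hbip.disj.ne_of_mem hy h2 rfl
          · exact hbip.disj.ne_of_mem hx h1 rfl
        have hYYne : ∀ x y : V, x ∈ Y → y ∈ Y → ¬ G.Adj x y := by
          intro x y hx hy hxy
          rcases hbip.adj hxy with ⟨h1, _⟩ | ⟨_, h2⟩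
          · exact hbip.disj.ne_of_mem h1 hx rfl
          · exact hbip.disj.ne_of_mem h2 hy rfl
        have hua'' : ¬ G.Adj u (a : V) := hXYne u a hux haX
        have hwc'' : ¬ G.Adj w (c : V) := hYYne w c hwY hcY
        intro i j
        fin_cases i <;> fin_cases j <;>
          simp only [Matrix.cons_val_zero, Matrix.cons_val_one, Matrix.head_cons,
            Matrix.cons_val_two, Matrix.tail_cons, Matrix.cons_val_three] <;>
          norm_num <;>
          first
          | exact huw
          | exact hwa
          | exact hac
          | exact huw.symm
          | exact hwa.symm
          | exact hac.symm
          | exact G.loopless _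
          | exact hua''
          | exact huc
          | exact hwc''
          | exact fun h => hua'' h.symm
          | exact fun h => huc h.symm
          | exact fun h => hwc'' h.symm
      · -- levels ≥ 3
        intro j hj
        fin_cases j
        · simp at hj
        · exact ⟨3, le_refl 3, hw3⟩
        · rcases a.2 with h | h
          · exact ⟨3, le_refl 3, h⟩
          · exact ⟨4, by norm_num, h⟩
        · rcases c.2 with h | h
          · exact ⟨3, le_refl 3, h⟩
          · exact ⟨4, by norm_num, h⟩

end Aux

/-- if no vertex of `N₂` is the endpoint of an induced `P₄` whose
remaining vertices lie in `⋃_{i ≥ 3} Nᵢ`, then every `u ∈ N₂` adjacent to some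
vertex of a connected component `Q` of `G[N₃ ∪ N₄]` is adjacent to all vertices
of `V(Q) ∩ N₃` in the opposite part of the bipartition. -/
theorem stmt_15 [Fintype V] (G : SimpleGraph V) (X Y : Set V)
    (hbip : Bipartition G X Y) (hP8 : P8Free G)
    (Dbasis : Set V) (hne : Dbasis.Nonempty)
    (hnoP4 : ¬ ∃ u ∈ lvl G Dbasis 2, ∃ q : Fin 4 → V, IsInducedPath G q ∧
        q 0 = u ∧ ∀ j : Fin 4, 1 ≤ j.val → ∃ i : ℕ, 3 ≤ i ∧ q j ∈ lvl G Dbasis i)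
    {u : V} (hu : u ∈ lvl G Dbasis 2)
    (q v : ↥(lvl G Dbasis 3 ∪ lvl G Dbasis 4))
    (hadj : G.Adj u q)
    (hreach : (G.induce (lvl G Dbasis 3 ∪ lvl G Dbasis 4)).Reachable q v) :
    (u ∈ X → (v : V) ∈ lvl G Dbasis 3 ∩ Y → G.Adj u v) ∧
      (u ∈ Y → (v : V) ∈ lvl G Dbasis 3 ∩ X → G.Adj u v) := by
  have hsym : Bipartition G Y X :=
    ⟨Set.union_comm X Y ▸ hbip.union, hbip.disj.symm,
     fun _ _ h => (hbip.adj h).symm⟩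
  obtain ⟨p⟩ := hreach
  constructor
  · intro hux ⟨hv3, hvY⟩
    have hqY : (q : V) ∈ Y := by
      rcases hbip.adj hadj with ⟨_, h2⟩ | ⟨h1, _⟩
      · exact h2
      · exact absurd rfl (hbip.disj.ne_of_mem hux h1)
    rcases walk_adj hbip hnoP4 hne hu hux p (Or.inl ⟨hqY, hadj⟩) with ⟨_, h⟩ | ⟨hX, _⟩
    · exact h
    · exact absurd rfl (hbip.disj.ne_of_mem hX hvY)
  · intro huy ⟨hv3, hvX⟩
    have hqX : (q : V) ∈ X := by
      rcases hbip.adj hadj with ⟨h1, _⟩ | ⟨_, h2⟩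
      · exact absurd rfl (hbip.disj.ne_of_mem h1 huy)
      · exact h2
    rcases walk_adj hsym hnoP4 hne hu huy p (Or.inl ⟨hqX, hadj⟩) with ⟨_, h⟩ | ⟨hX, _⟩
    · exact h
    · exact absurd rfl (hbip.disj.ne_of_mem hvX hX)
end

section
/- Under the same setup, if a component K of the induced subgraph on N_3 with an edge is P_4-free, then |D ∩ V(K)| = 1, and the unique D-vertex of K is adjacent to all other vertices of K. -/
open SimpleGraph

variable {V : Type*}

lemma p4_aux (G : SimpleGraph V) {x y z w : V}
    (hxy : G.Adj x y) (hyz : G.Adj y z) (hzw : G.Adj z w)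
    (hnxz : ¬ G.Adj x z) (hnyw : ¬ G.Adj y w) (hnxw : ¬ G.Adj x w)
    (hxz : x ≠ z) (hyw : y ≠ w) (hxw : x ≠ w) :
    IsInducedPath G ![x, y, z, w] := by
  have hxy' := hxy.ne
  have hyz' := hyz.ne
  have hzw' := hzw.ne
  constructor
  · intro i j hij
    fin_cases i <;> fin_cases j <;> simp_all
  · intro i j
    fin_cases i <;> fin_cases j <;>
      simp_all [G.adj_comm x y, G.adj_comm y z, G.adj_comm z w, G.adj_comm x z,
        G.adj_comm y w, G.adj_comm x w]

/-- a nontrivial `P₄`-free component `K` of `G[N₃]` contains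
exactly one `D`-vertex, which is adjacent to all other vertices of `K`. -/
theorem stmt_17 [Fintype V] (G : SimpleGraph V) (X Y : Set V)
    (hbip : Bipartition G X Y) (hP8 : P8Free G)
    (D Dbasis : Set V) (hD : IsEDS G D) (hsub : Dbasis ⊆ D)
    (hne : Dbasis.Nonempty) (K : Set V)
    (hK3 : K ⊆ lvl G Dbasis 3)
    (hKconn : ∀ a b : ↥(lvl G Dbasis 3), (a : V) ∈ K → (b : V) ∈ K →
        (G.induce (lvl G Dbasis 3)).Reachable a b)
    (hKclosed : ∀ a b : V, a ∈ K → b ∈ lvl G Dbasis 3 → G.Adj a b → b ∈ K)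
    (hKedge : ∃ a b : V, a ∈ K ∧ b ∈ K ∧ G.Adj a b)
    -- `K` contains no induced `P₄`:
    (hKP4free : ¬ ∃ p : Fin 4 → V, IsInducedPath G p ∧ ∀ i : Fin 4, p i ∈ K)
    -- standing assumptions from the context:
    (hDN12 : D ∩ (lvl G Dbasis 1 ∪ lvl G Dbasis 2) = ∅)
    (hN3edge : ∀ a b c : V, a ∈ lvl G Dbasis 3 → b ∈ lvl G Dbasis 3 → G.Adj a b →
        c ∈ lvl G Dbasis 4 → ¬ G.Adj a c)
    (hjoin : ∀ a b : V, a ∈ K ∩ X → b ∈ K ∩ Y → G.Adj a b →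
        (∀ u ∈ lvl G Dbasis 2, G.Adj u a → ∀ a' ∈ K ∩ X, G.Adj u a') ∧
        (∀ u ∈ lvl G Dbasis 2, G.Adj u b → ∀ b' ∈ K ∩ Y, G.Adj u b')) :
    ∃ v : V, D ∩ K = {v} ∧ ∀ w ∈ K, w ≠ v → G.Adj v w := by
  classical
  obtain ⟨a0, b0, ha0, hb0, hab0⟩ := hKedge
  -- bipartition helpers
  have hXor : ∀ v : V, v ∈ X ∨ v ∈ Y := by
    intro v
    have := hbip.union
    rw [Set.eq_univ_iff_forall] at this
    exact this v
  have hdisj : ∀ v : V, v ∈ X → v ∉ Y := fun v hv => Set.disjoint_left.mp hbip.disj hv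
  have hside : ∀ u v : V, G.Adj u v → (u ∈ X ↔ v ∉ X) := by
    intro u v huv
    rcases hbip.adj huv with ⟨hu, hv⟩ | ⟨hu, hv⟩
    · exact ⟨fun _ h => hdisj v h hv, fun _ => hu⟩
    · exact ⟨fun h => absurd hu (hdisj u h), fun h => absurd hv h⟩
  have hnadj : ∀ u v : V, (u ∈ X ↔ v ∈ X) → ¬ G.Adj u v := by
    intro u v h hadj
    have := hside u v hadj
    tauto
  -- P4-free step lemma
  have hstep : ∀ x y z w : V, x ∈ K → y ∈ K → z ∈ K → w ∈ K →
      G.Adj x y → G.Adj y z → G.Adj z w → x ≠ z → y ≠ w → G.Adj x w := by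
    intro x y z w hx hy hz hw hxy hyz hzw hxz hyw
    by_contra hnxw
    have s1 := hside x y hxy
    have s2 := hside y z hyz
    have s3 := hside z w hzw
    have sxz : x ∈ X ↔ z ∈ X := by tauto
    have syw : y ∈ X ↔ w ∈ X := by tauto
    have hnxz := hnadj x z sxz
    have hnyw := hnadj y w syw
    have hxw : x ≠ w := by
      intro h; subst h; tauto
    apply hKP4free
    exact ⟨![x, y, z, w], p4_aux G hxy hyz hzw hnxz hnyw hnxw hxz hyw hxw,
      fun i => by fin_cases i <;> [exact hx; exact hy; exact hz; exact hw]⟩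
  -- walk lemma: opposite-side vertices of K joined by a walk are adjacent
  have main : ∀ n : ℕ, ∀ a b : ↥(lvl G Dbasis 3),
      ∀ wlk : (G.induce (lvl G Dbasis 3)).Walk a b, wlk.length ≤ n →
      (a : V) ∈ K → ((a : V) ∈ X ↔ (b : V) ∉ X) → G.Adj (a : V) (b : V) := by
    intro n
    induction n with
    | zero =>
      intro a b wlk hlen ha hab
      cases wlk with
      | nil => exact absurd hab (by tauto)
      | cons h p => simp [Walk.length_cons] at hlen
    | succ n ih =>
      intro a b wlk hlen ha hab
      cases wlk with
      | nil => exact absurd hab (by tauto)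
      | cons h p =>
        rename_i c
        have hac : G.Adj (a : V) (c : V) := h
        have hcK : (c : V) ∈ K := hKclosed a c ha c.2 hac
        cases p with
        | nil => exact hac
        | cons h' p' =>
          rename_i d
          have hcd : G.Adj (c : V) (d : V) := h'
          have hdK : (d : V) ∈ K := hKclosed c d hcK d.2 hcd
          by_cases had : (a : V) = (d : V)
          · have : a = d := Subtype.ext had
            subst this
            have hlen' : p'.length ≤ n := by
              simp [Walk.length_cons] at hlen; omega
            exact ih a b p' hlen' ha hab
          · cases p' with
            | nil =>
              exfalso
              have s1 := hside (a : V) (c : V) hac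
              have s2 := hside (c : V) (b : V) hcd
              tauto
            | cons h'' q =>
              rename_i e
              have hde : G.Adj (d : V) (e : V) := h''
              have heK : (e : V) ∈ K := hKclosed d e hdK e.2 hde
              by_cases hce : (c : V) = (e : V)
              · have hce' : c = e := Subtype.ext hce
                subst hce'
                have hlen' : (Walk.cons h q).length ≤ n := by
                  simp [Walk.length_cons] at hlen ⊢; omega
                exact ih a b (Walk.cons h q) hlen' ha hab
              · have hae : G.Adj (a : V) (e : V) :=
                  hstep a c d e ha hcK hdK heK hac hcd hde had hce
                have hae' : (G.induce (lvl G Dbasis 3)).Adj a e := hae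
                have hlen' : (Walk.cons hae' q).length ≤ n := by
                  simp [Walk.length_cons] at hlen ⊢; omega
                exact ih a b (Walk.cons hae' q) hlen' ha hab
  have hopp : ∀ u v : V, u ∈ K → v ∈ K → (u ∈ X ↔ v ∉ X) → G.Adj u v := by
    intro u v hu hv huv
    obtain ⟨wlk⟩ := hKconn ⟨u, hK3 hu⟩ ⟨v, hK3 hv⟩ hu hv
    exact main wlk.length ⟨u, hK3 hu⟩ ⟨v, hK3 hv⟩ wlk le_rfl hu huv
  -- every vertex of K has a neighbor in K
  have hnbr0 : ∀ (a b : ↥(lvl G Dbasis 3)) (w : (G.induce (lvl G Dbasis 3)).Walk a b),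
      (a : V) ∈ K → ((a : V) = (b : V) ∨ ∃ c ∈ K, G.Adj (a : V) c) := by
    intro a b w ha
    cases w with
    | nil => exact Or.inl rfl
    | cons h p =>
      rename_i c
      have hac : G.Adj (a : V) (c : V) := h
      exact Or.inr ⟨c, hKclosed a c ha c.2 hac, hac⟩
  have hnbr : ∀ v ∈ K, ∃ w ∈ K, G.Adj v w := by
    intro v hv
    obtain ⟨wlk⟩ := hKconn ⟨v, hK3 hv⟩ ⟨a0, hK3 ha0⟩ hv ha0
    rcases hnbr0 _ _ wlk hv with h | h
    · simp only at h; subst h; exact ⟨b0, hb0, hab0⟩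
    · exact h
  -- the dominator of a vertex of K lies in K
  have hdom : ∀ v ∈ K, ∃ d, d ∈ D ∧ d ∈ closedNbhd G v ∧ d ∈ K := by
    intro v hv
    obtain ⟨d, ⟨hdD, hdN⟩, _⟩ := hD v
    refine ⟨d, hdD, hdN, ?_⟩
    rcases Set.mem_insert_iff.mp hdN with rfl | hadj
    · exact hv
    · have hadj : G.Adj v d := hadj
      have hv3 : distToSet G Dbasis v = 3 := hK3 hv
      have hlt : sInf ((fun s => G.edist v s) '' Dbasis) < 4 := by
        rw [show sInf ((fun s => G.edist v s) '' Dbasis) = distToSet G Dbasis v from rfl, hv3]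
        norm_num
      obtain ⟨x, hx, hxlt⟩ := sInf_lt_iff.mp hlt
      obtain ⟨s0, hs0, rfl⟩ := hx
      have hvs0 : G.edist v s0 ≤ 3 := by
        rw [show (4 : ℕ∞) = 3 + 1 from rfl, ENat.lt_add_one_iff (by simp)] at hxlt
        exact hxlt
      have hdv1 : G.edist d v = 1 := by
        rw [edist_comm]; exact edist_eq_one_iff_adj.mpr hadj
      have hub : distToSet G Dbasis d ≤ 4 := by
        have h1 : G.edist d s0 ≤ G.edist d v + G.edist v s0 := G.edist_triangle
        calc distToSet G Dbasis d ≤ G.edist d s0 := sInf_le ⟨s0, hs0, rfl⟩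
          _ ≤ G.edist d v + G.edist v s0 := h1
          _ ≤ 1 + 3 := by rw [hdv1]; exact add_le_add (le_refl 1) hvs0
          _ = 4 := by norm_num
      have hlb : 2 ≤ distToSet G Dbasis d := by
        by_contra hc
        push_neg at hc
        obtain ⟨x, hx, hxlt⟩ := sInf_lt_iff.mp hc
        obtain ⟨s1, hs1, rfl⟩ := hx
        have hd1 : G.edist d s1 ≤ 1 := by
          rw [show (2 : ℕ∞) = 1 + 1 from rfl, ENat.lt_add_one_iff (by simp)] at hxlt
          exact hxlt
        have hvd1 : G.edist v d = 1 := edist_eq_one_iff_adj.mpr hadj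
        have h2 : distToSet G Dbasis v ≤ 2 := by
          calc distToSet G Dbasis v ≤ G.edist v s1 := sInf_le ⟨s1, hs1, rfl⟩
            _ ≤ G.edist v d + G.edist d s1 := G.edist_triangle
            _ ≤ 1 + 1 := by rw [hvd1]; exact add_le_add (le_refl 1) hd1
            _ = 2 := by norm_num
        rw [hv3] at h2
        norm_num at h2
      have hmtop : distToSet G Dbasis d ≠ ⊤ := by
        intro h; rw [h] at hub; simp at hub
      obtain ⟨k, hk⟩ : ∃ k : ℕ, distToSet G Dbasis d = (k : ℕ∞) :=
        ⟨(distToSet G Dbasis d).toNat, (ENat.coe_toNat hmtop).symm⟩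
      rw [hk] at hub hlb
      have hk2 : 2 ≤ k := by exact_mod_cast hlb
      have hk4 : k ≤ 4 := by exact_mod_cast hub
      interval_cases k
      · exfalso
        have : d ∈ D ∩ (lvl G Dbasis 1 ∪ lvl G Dbasis 2) :=
          ⟨hdD, Or.inr (by exact_mod_cast hk)⟩
        rw [hDN12] at this
        exact this
      · exact hKclosed v d hv (by exact_mod_cast hk) hadj
      · exfalso
        obtain ⟨w, hwK, hvw⟩ := hnbr v hv
        exact hN3edge v w d (hK3 hv) (hK3 hwK) hvw (by exact_mod_cast hk) hadj
  -- assemble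
  obtain ⟨d, hdD, _, hdK⟩ := hdom a0 ha0
  have heqside : ∀ w ∈ K, (w ∈ X ↔ d ∈ X) → w = d := by
    intro w hw hwside
    obtain ⟨e, heD, heN, heK⟩ := hdom w hw
    rcases Set.mem_insert_iff.mp heN with heq | hadj
    · -- w itself is in D; find an opposite-side vertex y ∈ K
      have hwD : w ∈ D := heq ▸ heD
      have sab := hside a0 b0 hab0
      obtain ⟨y, hyK, hy⟩ : ∃ y, y ∈ K ∧ (w ∈ X ↔ y ∉ X) := by
        by_cases hwa : w ∈ X ↔ a0 ∈ X
        · exact ⟨b0, hb0, by tauto⟩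
        · exact ⟨a0, ha0, by tauto⟩
      have hwy : G.Adj w y := hopp w y hw hyK hy
      have hdy : G.Adj d y := hopp d y hdK hyK (by tauto)
      obtain ⟨f, _, hu⟩ := hD y
      have h1 := hu w ⟨hwD, Set.mem_insert_iff.mpr (Or.inr hwy.symm)⟩
      have h2 := hu d ⟨hdD, Set.mem_insert_iff.mpr (Or.inr hdy.symm)⟩
      exact h1.trans h2.symm
    · have hadj : G.Adj w e := hadj
      by_cases hed : e = d
      · subst hed
        exact absurd hadj (hnadj w e hwside)
      · have swe := hside w e hadj
        have hde : G.Adj d e := hopp d e hdK heK (by tauto)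
        obtain ⟨f, _, hu⟩ := hD e
        have h1 := hu e ⟨heD, Set.mem_insert _ _⟩
        have h2 := hu d ⟨hdD, Set.mem_insert_iff.mpr (Or.inr hde.symm)⟩
        exact absurd (h2.trans h1.symm).symm hed
  refine ⟨d, ?_, ?_⟩
  · ext e
    constructor
    · rintro ⟨heD, heK⟩
      by_cases hs : e ∈ X ↔ d ∈ X
      · exact heqside e heK hs
      · have hde : G.Adj d e := hopp d e hdK heK (by tauto)
        obtain ⟨f, _, hu⟩ := hD e
        have h1 := hu e ⟨heD, Set.mem_insert _ _⟩
        have h2 := hu d ⟨hdD, Set.mem_insert_iff.mpr (Or.inr hde.symm)⟩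
        exact h1.trans h2.symm
    · rintro rfl
      exact ⟨hdD, hdK⟩
  · intro w hw hwd
    by_cases hs : w ∈ X ↔ d ∈ X
    · exact absurd (heqside w hw hs) hwd
    · exact (hopp w d hw hdK (by tauto)).symm
end

section
/- If an induced cycle C_4 on vertices (x_1, y_1, x_2, y_2) forms an entire connected component K of G[N_3] (with no neighbors in N_4 and D ∩ N_2 = ∅), then G has no efficient dominating set D containing D_basis: no choice of a D-vertex in K leaves every vertex of K dominated exactly once. -/
open SimpleGraph

variable {V : Type*}

-- lemma: neighbor of a level-3 vertex has level 2, 3 or 4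
lemma nbr_lvl (G : SimpleGraph V) (S : Set V) (hS : S.Nonempty) {v w : V}
    (hv : v ∈ lvl G S 3) (hadj : G.Adj v w) :
    w ∈ lvl G S 2 ∨ w ∈ lvl G S 3 ∨ w ∈ lvl G S 4 := by
  have hv3 : distToSet G S v = 3 := hv
  have hlb : ∀ d ∈ S, (3 : ℕ∞) ≤ G.edist v d := by
    intro d hd
    rw [← hv3]
    exact sInf_le ⟨d, hd, rfl⟩
  have hex : ∃ d ∈ S, G.edist v d ≤ 3 := by
    by_contra h
    push_neg at h
    have : (4 : ℕ∞) ≤ distToSet G S v := by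
      apply le_sInf
      rintro _ ⟨d, hd, rfl⟩
      have := h d hd
      exact Order.add_one_le_of_lt this
    rw [hv3] at this
    exact absurd this (by decide)
  obtain ⟨d₀, hd₀, hle⟩ := hex
  have h1 : G.edist v w = 1 := (SimpleGraph.edist_eq_one_iff_adj (G:=G)).mpr hadj
  have hub : distToSet G S w ≤ 4 := by
    refine sInf_le_of_le ⟨d₀, hd₀, rfl⟩ ?_
    calc G.edist w d₀ ≤ G.edist w v + G.edist v d₀ := SimpleGraph.edist_triangle
    _ ≤ 1 + 3 := by rw [SimpleGraph.edist_comm, h1]; exact add_le_add le_rfl hle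
    _ = 4 := by decide
  have hlb2 : (2 : ℕ∞) ≤ distToSet G S w := by
    apply le_sInf
    rintro _ ⟨d, hd, rfl⟩
    have h3 : (3 : ℕ∞) ≤ G.edist v d := hlb d hd
    have htri : G.edist v d ≤ 1 + G.edist w d := by
      calc G.edist v d ≤ G.edist v w + G.edist w d := SimpleGraph.edist_triangle
      _ = 1 + G.edist w d := by rw [h1]
    have : (3 : ℕ∞) ≤ 1 + G.edist w d := le_trans h3 htri
    show (2:ℕ∞) ≤ G.edist w d
    cases hwd : G.edist w d with
    | top => exact le_top
    | coe n =>
      rw [hwd] at this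
      have h3n : (3:ℕ) ≤ 1 + n := by exact_mod_cast this
      exact_mod_cast by omega
  set m := distToSet G S w with hm
  have hmne : m ≠ ⊤ := by
    intro h; rw [h] at hub; exact absurd hub (by decide)
  lift m to ℕ using hmne with n hn
  have h2 : 2 ≤ n := by exact_mod_cast hlb2
  have h4 : n ≤ 4 := by exact_mod_cast hub
  interval_cases n
  · left; exact hm.symm
  · right; left; exact hm.symm
  · right; right; exact hm.symm

/-- if an induced `C₄` `(x₁,y₁,x₂,y₂)` forms an entire component
of `G[N₃]` with no neighbors in `N₄`, then `G` has no e.d.s. containing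
`D_basis`. -/
theorem stmt_18 [Fintype V] (G : SimpleGraph V) (X Y : Set V)
    (hbip : Bipartition G X Y)
    (Dbasis : Set V) (hne : Dbasis.Nonempty)
    {x₁ y₁ x₂ y₂ : V}
    (hdistinct : x₁ ≠ x₂ ∧ y₁ ≠ y₂ ∧ x₁ ≠ y₁ ∧ x₁ ≠ y₂ ∧ x₂ ≠ y₁ ∧ x₂ ≠ y₂)
    (hC4 : G.Adj x₁ y₁ ∧ G.Adj y₁ x₂ ∧ G.Adj x₂ y₂ ∧ G.Adj y₂ x₁ ∧
        ¬ G.Adj x₁ x₂ ∧ ¬ G.Adj y₁ y₂)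
    (hK3 : ({x₁, y₁, x₂, y₂} : Set V) ⊆ lvl G Dbasis 3)
    -- the `C₄` is a whole component of `G[N₃]`, with no neighbors in `N₄`:
    (hcomp : ∀ v ∈ ({x₁, y₁, x₂, y₂} : Set V), ∀ w : V, G.Adj v w →
        w ∉ lvl G Dbasis 3 \ {x₁, y₁, x₂, y₂} ∧ w ∉ lvl G Dbasis 4)
    -- any e.d.s. containing `D_basis` avoids `N₁ ∪ N₂`:
    (hexcl : ∀ D : Set V, IsEDS G D → Dbasis ⊆ D →
        D ∩ (lvl G Dbasis 1 ∪ lvl G Dbasis 2) = ∅) :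
    ¬ ∃ D : Set V, IsEDS G D ∧ Dbasis ⊆ D := by
  intro ⟨D, hD, hsub⟩
  obtain ⟨hne12, hne34, hne13, hne14, hne23, hne24⟩ := hdistinct
  obtain ⟨a12, a23, a34, a41, na13, na24⟩ := hC4
  set K : Set V := {x₁, y₁, x₂, y₂} with hK
  have hxcl := hexcl D hD hsub
  -- any D-dominator of a vertex of K is the vertex itself or lies in K
  have hB : ∀ v ∈ K, ∀ d, d ∈ D → d ∈ closedNbhd G v → d = v ∨ d ∈ K := by
    intro v hv d hdD hdC
    rcases hdC with h | h
    · exact Or.inl h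
    · have hadj : G.Adj v d := h
      right
      have hlev := nbr_lvl G Dbasis hne (hK3 hv) hadj
      have hcv := hcomp v hv d hadj
      rcases hlev with h2 | h3 | h4
      · exfalso
        have : d ∈ D ∩ (lvl G Dbasis 1 ∪ lvl G Dbasis 2) := ⟨hdD, Or.inr h2⟩
        rw [hxcl] at this
        exact this
      · by_contra hdK
        exact hcv.1 ⟨h3, hdK⟩
      · exact absurd h4 hcv.2
  -- closed-neighborhood memberships
  have mself : ∀ v : V, v ∈ closedNbhd G v := fun v => Set.mem_insert _ _
  have madj : ∀ {u v : V}, G.Adj u v → v ∈ closedNbhd G u := by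
    intro u v h; exact Set.mem_insert_of_mem _ h
  have mx1 : x₁ ∈ K := by simp [hK]
  have my1 : y₁ ∈ K := by simp [hK]
  have mx2 : x₂ ∈ K := by simp [hK]
  have my2 : y₂ ∈ K := by simp [hK]
  -- pairwise exclusions: no two of the four can both be in D
  have pair : ∀ w u v : V, u ∈ closedNbhd G w → v ∈ closedNbhd G w → u ≠ v →
      ¬(u ∈ D ∧ v ∈ D) := by
    rintro w u v hu hv huv ⟨h1, h2⟩
    obtain ⟨z, -, hz⟩ := hD w
    have e1 := hz u ⟨h1, hu⟩
    have e2 := hz v ⟨h2, hv⟩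
    exact huv (e1.trans e2.symm)
  have p12 := pair x₁ x₁ y₁ (mself x₁) (madj a12) hne13
  have p14 := pair x₁ x₁ y₂ (mself x₁) (madj a41.symm) hne14
  have p24 := pair x₁ y₁ y₂ (madj a12) (madj a41.symm) hne34
  have p13 := pair y₁ x₁ x₂ (madj a12.symm) (madj a23) hne12
  have p23 := pair x₂ y₁ x₂ (madj a23.symm) (mself x₂) (Ne.symm hne23)
  have p34 := pair x₂ x₂ y₂ (mself x₂) (madj a34) hne24
  -- existence: the dominator of each vertex of K lies in K
  have dom : ∀ v ∈ K, ∃ d ∈ K, d ∈ D ∧ d ∈ closedNbhd G v := by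
    intro v hv
    obtain ⟨d, ⟨hdD, hdC⟩, -⟩ := hD v
    rcases hB v hv d hdD hdC with rfl | hdK
    · exact ⟨d, hv, hdD, hdC⟩
    · exact ⟨d, hdK, hdD, hdC⟩
  have ex1 : x₁ ∈ D ∨ y₁ ∈ D ∨ y₂ ∈ D := by
    obtain ⟨d, hdK, hdD, hdC⟩ := dom x₁ mx1
    rcases hdK with rfl | rfl | rfl | rfl
    · exact Or.inl hdD
    · exact Or.inr (Or.inl hdD)
    · exfalso
      rcases hdC with h | h
      · exact hne12 h.symm
      · exact na13 h
    · exact Or.inr (Or.inr hdD)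
  have ex2 : x₂ ∈ D ∨ y₁ ∈ D ∨ y₂ ∈ D := by
    obtain ⟨d, hdK, hdD, hdC⟩ := dom x₂ mx2
    rcases hdK with rfl | rfl | rfl | rfl
    · exfalso
      rcases hdC with h | h
      · exact hne12 h
      · exact na13 ((G.adj_symm h))
    · exact Or.inr (Or.inl hdD)
    · exact Or.inl hdD
    · exact Or.inr (Or.inr hdD)
  have ex3 : y₁ ∈ D ∨ x₁ ∈ D ∨ x₂ ∈ D := by
    obtain ⟨d, hdK, hdD, hdC⟩ := dom y₁ my1
    rcases hdK with rfl | rfl | rfl | rfl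
    · exact Or.inr (Or.inl hdD)
    · exact Or.inl hdD
    · exact Or.inr (Or.inr hdD)
    · exfalso
      rcases hdC with h | h
      · exact hne34 h.symm
      · simp only [SimpleGraph.mem_neighborSet] at h
        exact na24 h
  have ex4 : y₂ ∈ D ∨ x₁ ∈ D ∨ x₂ ∈ D := by
    obtain ⟨d, hdK, hdD, hdC⟩ := dom y₂ my2
    rcases hdK with rfl | rfl | rfl | rfl
    · exact Or.inr (Or.inl hdD)
    · exfalso
      rcases hdC with h | h
      · exact hne34 h
      · simp only [SimpleGraph.mem_neighborSet] at h
        exact na24 h.symm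
    · exact Or.inr (Or.inr hdD)
    · exact Or.inl hdD
  rcases ex1 with ha | hb | hd
  · rcases ex2 with hc | hb | hd
    · exact p13 ⟨ha, hc⟩
    · exact p12 ⟨ha, hb⟩
    · exact p14 ⟨ha, hd⟩
  · rcases ex4 with hd | ha | hc
    · exact p24 ⟨hb, hd⟩
    · exact p12 ⟨ha, hb⟩
    · exact p23 ⟨hb, hc⟩
  · rcases ex3 with hb | ha | hc
    · exact p24 ⟨hb, hd⟩
    · exact p14 ⟨ha, hd⟩
    · exact p34 ⟨hc, hd⟩
end

section
/- Let G be a bipartite graph with bipartition (X,Y) having an efficient dominating set D with |D ∩ X| = 1, say D ∩ X = {x}. Then D = {x} ∪ (Y \ N(x)). -/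
open SimpleGraph

variable {V : Type*}

/-- if a bipartite graph with parts `X, Y` has an e.d.s. `D` with
`D ∩ X = {x}`, then `D = {x} ∪ (Y \ N(x))`. -/
theorem stmt_19 [Fintype V] (G : SimpleGraph V) (X Y : Set V)
    (hbip : Bipartition G X Y)
    (D : Set V) (hD : IsEDS G D) {x : V} (hx : D ∩ X = {x}) :
    D = {x} ∪ (Y \ G.neighborSet x) := by
  have hxD : x ∈ D ∧ x ∈ X := by
    have : x ∈ D ∩ X := hx ▸ rfl
    exact ⟨this.1, this.2⟩
  ext v
  constructor
  · intro hv
    by_cases hvX : v ∈ X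
    · left
      have : v ∈ D ∩ X := ⟨hv, hvX⟩
      rw [hx] at this
      exact this
    · have hvY : v ∈ Y := by
        have := hbip.union
        have hv' : v ∈ X ∪ Y := this ▸ Set.mem_univ v
        rcases hv' with h | h
        · exact absurd h hvX
        · exact h
      right
      refine ⟨hvY, fun hadj => ?_⟩
      -- hadj : G.Adj x v ; then x's closed nbhd contains both x and v in D
      obtain ⟨d, _, huniq⟩ := hD x
      have h1 : x = d := huniq x ⟨hxD.1, Set.mem_insert _ _⟩
      have h2 : v = d := huniq v ⟨hv, Set.mem_insert_of_mem _ hadj⟩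
      have : v = x := h2.trans h1.symm
      exact hvX (this ▸ hxD.2)
  · intro hv
    rcases hv with h | ⟨hvY, hvN⟩
    · exact h ▸ hxD.1
    · obtain ⟨d, ⟨hdD, hdN⟩, huniq⟩ := hD v
      rcases hdN with h | h
      · exact h ▸ hdD
      · -- d ∈ N(v), so Adj v d, d ∈ X
        have hadj : G.Adj v d := h
        have hdX : d ∈ X := by
          rcases hbip.adj hadj with ⟨h1, h2⟩ | ⟨h1, h2⟩
          · exact absurd hvY (hbip.disj.subset_compl_right h1)
          · exact h2
        have : d ∈ D ∩ X := ⟨hdD, hdX⟩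
        rw [hx] at this
        subst this
        exact absurd hadj.symm hvN
end
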